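/- arXiv:2102.05028 — 2 statements merged into one kernel-verified Lean document; each statement's English description precedes it below -/
import Mathlib

section
/- Let A be a positive integer and let a = ⌊√A⌋. If √A - a > 0 (i.e., A is not a perfect square), then for each h ∈ {a, a+1}, we have A/h + h ≤ ⌈2√A⌉ (where A/h denotes the real-valued quotient). -/
theorem stmt_0 (A : ℕ) (hA : 0 < A) (a : ℕ) (ha : a = Nat.sqrt A)
    (hfrac : Real.sqrt A - a > 0) :
    ∀ h : ℕ, (h = a ∨ h = a + 1) →
      (A : ℝ) / h + h ≤ (⌈2 * Real.sqrt A⌉ : ℝ) := by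
  intro h hh
  have ha1 : 1 ≤ a := by
    rw [ha]; exact Nat.sqrt_pos.mpr hA
  have hle : a * a ≤ A := by rw [ha]; simpa [pow_two] using Nat.sqrt_le' A
  have hlt : A < (a + 1) * (a + 1) := by rw [ha]; simpa [pow_two, Nat.succ_eq_add_one] using Nat.lt_succ_sqrt' A
  have hne : a * a ≠ A := by
    intro hEq
    have : Real.sqrt A = a := by
      rw [← hEq]; push_cast
      rw [show ((a:ℝ) * a) = (a:ℝ)^2 by ring, Real.sqrt_sq (by positivity)]
    rw [this] at hfrac; linarith
  have hlow : a * a + 1 ≤ A := Nat.succ_le_of_lt (lt_of_le_of_ne hle hne)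
  have hup : A ≤ a * a + 2 * a := by nlinarith
  have hupR : (A : ℝ) ≤ a * a + 2 * a := by exact_mod_cast hup
  have haR : (1 : ℝ) ≤ a := by exact_mod_cast ha1
  have hs : (a : ℝ) < Real.sqrt A := by linarith
  by_cases hc : A ≤ a * a + a
  · have hcR : (A : ℝ) ≤ a * a + a := by exact_mod_cast hc
    have hceil : (2 * a + 1 : ℝ) ≤ (⌈2 * Real.sqrt A⌉ : ℝ) := by
      have h2 : ((2 * a : ℤ) : ℝ) < (⌈2 * Real.sqrt A⌉ : ℝ) := by
        push_cast
        calc (2 * (a:ℝ)) < 2 * Real.sqrt A := by linarith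
          _ ≤ ⌈2 * Real.sqrt A⌉ := Int.le_ceil _
      have h3 : (2 * a : ℤ) < ⌈2 * Real.sqrt A⌉ := by exact_mod_cast h2
      have h4 : (2 * a + 1 : ℤ) ≤ ⌈2 * Real.sqrt A⌉ := h3
      exact_mod_cast h4
    rcases hh with heq | heq <;> rw [heq] <;> push_cast
    · have hpos : (0 : ℝ) < a := by linarith
      have : (A : ℝ) / a ≤ a + 1 := by
        rw [div_le_iff₀ hpos]; nlinarith
      linarith
    · have hpos : (0 : ℝ) < (a : ℝ) + 1 := by linarith
      have : (A : ℝ) / ((a : ℝ) + 1) ≤ a := by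
        rw [div_le_iff₀ hpos]; nlinarith
      linarith
  · have hc' : a * a + a + 1 ≤ A := by omega
    have hcR : (a * a + a + 1 : ℝ) ≤ A := by exact_mod_cast hc'
    have hs2 : (a : ℝ) + 1 / 2 < Real.sqrt A := by
      have h0 : ((a : ℝ) + 1 / 2) ^ 2 < A := by nlinarith
      exact (Real.lt_sqrt (by positivity)).mpr h0
    have hceil : (2 * a + 2 : ℝ) ≤ (⌈2 * Real.sqrt A⌉ : ℝ) := by
      have h2 : ((2 * a + 1 : ℤ) : ℝ) < (⌈2 * Real.sqrt A⌉ : ℝ) := by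
        push_cast
        calc (2 * (a:ℝ) + 1) < 2 * Real.sqrt A := by linarith
          _ ≤ ⌈2 * Real.sqrt A⌉ := Int.le_ceil _
      have h3 : (2 * a + 1 : ℤ) < ⌈2 * Real.sqrt A⌉ := by exact_mod_cast h2
      have h4 : (2 * a + 2 : ℤ) ≤ ⌈2 * Real.sqrt A⌉ := h3
      exact_mod_cast h4
    rcases hh with heq | heq <;> rw [heq] <;> push_cast
    · have hpos : (0 : ℝ) < a := by linarith
      have : (A : ℝ) / a ≤ a + 2 := by
        rw [div_le_iff₀ hpos]; nlinarith
      linarith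
    · have hpos : (0 : ℝ) < (a : ℝ) + 1 := by linarith
      have : (A : ℝ) / ((a : ℝ) + 1) ≤ a + 1 := by
        rw [div_le_iff₀ hpos]; nlinarith
      linarith
end

section
/- Let X_1,…,X_n be independent nonnegative random variables, each with support contained in {0} ∪ [L, ∞) for some L > 0, and suppose Σ_{v=1}^n E[X_v] ≥ L. Then for every assignment of the indices to k bins V_1,…,V_k, we have E[max_{1≤i≤k} Σ_{v∈V_i} X_v] ≥ L/4. -/
/-!
Let `p` be the probability that every `X v` vanishes. Off that event some `X v` is at least `L`,
hence so is the largest bin load: `E[max] ≥ L (1 - p)`. The largest bin load also dominates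
`∑ v, X v * 1{X w = 0 for all w ≠ v}`, whose expectation is, by independence,
`∑ v, E[X v] * P(X w = 0 for all w ≠ v) ≥ p * ∑ v, E[X v] ≥ p L`.
Adding the two bounds gives `E[max] ≥ L / 2`.
-/

open MeasureTheory ProbabilityTheory Finset

noncomputable def zeroIndicator : ℝ → ℝ := ({0} : Set ℝ).indicator 1

lemma zeroIndicator_zero : zeroIndicator 0 = 1 := by simp [zeroIndicator]

lemma zeroIndicator_of_ne_zero {t : ℝ} (ht : t ≠ 0) : zeroIndicator t = 0 := by
  simp [zeroIndicator, ht]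

lemma zeroIndicator_nonneg (t : ℝ) : 0 ≤ zeroIndicator t :=
  Set.indicator_nonneg (fun _ _ => zero_le_one) t

lemma zeroIndicator_le_one (t : ℝ) : zeroIndicator t ≤ 1 :=
  Set.indicator_le_self' (fun _ _ => zero_le_one) t

lemma measurable_zeroIndicator : Measurable zeroIndicator :=
  measurable_one.indicator (measurableSet_singleton 0)

section Pointwise

variable {ι : Type*} [Fintype ι] {x : ι → ℝ} {z : ℝ}

lemma mul_one_sub_prod_zeroIndicator_le {L : ℝ} (hx : ∀ v, x v = 0 ∨ L ≤ x v)
    (hxz : ∀ v, x v ≤ z) (hz : 0 ≤ z) :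
    L * (1 - ∏ w, zeroIndicator (x w)) ≤ z := by
  by_cases h : ∀ w, x w = 0
  · simpa [h, zeroIndicator_zero] using hz
  · obtain ⟨w, hw⟩ := not_forall.1 h
    rw [prod_eq_zero (mem_univ w) (zeroIndicator_of_ne_zero hw), sub_zero, mul_one]
    exact ((hx w).resolve_left hw).trans (hxz w)

variable [DecidableEq ι]

lemma sum_mul_prod_erase_zeroIndicator_le (hxz : ∀ v, x v ≤ z) (hz : 0 ≤ z) :
    ∑ v, x v * ∏ w ∈ univ.erase v, zeroIndicator (x w) ≤ z := by
  have prod_erase_eq_zero {v w : ι} (hwv : w ≠ v) (hw : x w ≠ 0) :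
      ∏ u ∈ univ.erase v, zeroIndicator (x u) = 0 :=
    prod_eq_zero (mem_erase.2 ⟨hwv, mem_univ w⟩) (zeroIndicator_of_ne_zero hw)
  by_cases h : ∃ v, x v ≠ 0 ∧ ∀ w ≠ v, x w = 0
  · obtain ⟨v, hv, hothers⟩ := h
    rw [sum_eq_single v (fun w _ hwv => by rw [prod_erase_eq_zero (Ne.symm hwv) hv, mul_zero])
      (by simp)]
    rw [prod_eq_one fun w hw => by rw [hothers w (ne_of_mem_erase hw), zeroIndicator_zero],
      mul_one]
    exact hxz v
  · push Not at h
    rw [sum_eq_zero fun v _ => ?_]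
    · exact hz
    by_cases hv : x v = 0
    · rw [hv, zero_mul]
    · obtain ⟨w, hwv, hw⟩ := h v hv
      rw [prod_erase_eq_zero hwv hw, mul_zero]

end Pointwise

section Probability

variable {Ω ι : Type*} [MeasurableSpace Ω] {μ : Measure Ω} {X : ι → Ω → ℝ}

lemma norm_prod_zeroIndicator_le_one (s : Finset ι) (x : ι → ℝ) :
    ‖∏ w ∈ s, zeroIndicator (x w)‖ ≤ 1 := by
  rw [Real.norm_of_nonneg (prod_nonneg fun w _ => zeroIndicator_nonneg _)]
  exact prod_le_one (fun w _ => zeroIndicator_nonneg _) fun w _ => zeroIndicator_le_one _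

lemma aestronglyMeasurable_prod_zeroIndicator (hX : ∀ w, AEMeasurable (X w) μ)
    (s : Finset ι) : AEStronglyMeasurable (fun ω => ∏ w ∈ s, zeroIndicator (X w ω)) μ :=
  Finset.aestronglyMeasurable_fun_prod s fun w _ =>
    (measurable_zeroIndicator.comp_aemeasurable (hX w)).aestronglyMeasurable

lemma integrable_prod_zeroIndicator [IsFiniteMeasure μ] (hX : ∀ w, AEMeasurable (X w) μ)
    (s : Finset ι) : Integrable (fun ω => ∏ w ∈ s, zeroIndicator (X w ω)) μ :=
  .of_bound (aestronglyMeasurable_prod_zeroIndicator hX s) 1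
    (ae_of_all _ fun ω => norm_prod_zeroIndicator_le_one s (X · ω))

lemma integrable_mul_prod_zeroIndicator (hX : ∀ w, AEMeasurable (X w) μ) {Y : Ω → ℝ}
    (hY : Integrable Y μ) (s : Finset ι) :
    Integrable (fun ω => Y ω * ∏ w ∈ s, zeroIndicator (X w ω)) μ :=
  hY.mul_bdd (aestronglyMeasurable_prod_zeroIndicator hX s)
    (ae_of_all _ fun ω => norm_prod_zeroIndicator_le_one s (X · ω))

lemma integral_zeroIndicator_le_one [IsProbabilityMeasure μ] (Y : Ω → ℝ) :
    ∫ ω, zeroIndicator (Y ω) ∂μ ≤ 1 := by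
  simpa using integral_mono_of_nonneg (ae_of_all _ fun ω => zeroIndicator_nonneg (Y ω))
    (integrable_const (μ := μ) (1 : ℝ)) (ae_of_all _ fun ω => zeroIndicator_le_one (Y ω))

variable [Fintype ι]

lemma ProbabilityTheory.iIndepFun.integral_prod_zeroIndicator (hXi : iIndepFun X μ)
    (hX : ∀ w, AEMeasurable (X w) μ) :
    ∫ ω, ∏ w, zeroIndicator (X w ω) ∂μ = ∏ w, ∫ ω, zeroIndicator (X w ω) ∂μ :=
  hXi.integral_fun_prod_comp (f := fun _ => zeroIndicator) hX
    fun _ => measurable_zeroIndicator.aestronglyMeasurable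

lemma ProbabilityTheory.iIndepFun.integral_mul_prod_erase_zeroIndicator [DecidableEq ι]
    (hXi : iIndepFun X μ) (hX : ∀ w, AEMeasurable (X w) μ) (v : ι) :
    ∫ ω, X v ω * ∏ w ∈ univ.erase v, zeroIndicator (X w ω) ∂μ =
      (∫ ω, X v ω ∂μ) * ∏ w ∈ univ.erase v, ∫ ω, zeroIndicator (X w ω) ∂μ := by
  let F : ι → ℝ → ℝ := fun w => if w = v then id else zeroIndicator
  have split (c : ι → (ℝ → ℝ) → ℝ) :
      ∏ w, c w (F w) = c v id * ∏ w ∈ univ.erase v, c w zeroIndicator := by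
    rw [← mul_prod_erase univ _ (mem_univ v)]
    congr 1
    · simp [F]
    · exact prod_congr rfl fun w hw => by simp [F, ne_of_mem_erase hw]
  have key := hXi.integral_fun_prod_comp (f := F) hX fun w => by
    by_cases hw : w = v
    · simpa [F, hw] using measurable_id.aestronglyMeasurable
    · simpa [F, hw] using measurable_zeroIndicator.aestronglyMeasurable
  rw [split fun w g => ∫ ω, g (X w ω) ∂μ] at key
  refine (integral_congr_ae (ae_of_all _ fun ω => ?_)).trans key
  exact (split fun w g => g (X w ω)).symm

theorem ProbabilityTheory.iIndepFun.le_two_mul_integral_of_forall_le (hXi : iIndepFun X μ)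
    (hint : ∀ v, Integrable (X v) μ) (h0 : ∀ v ω, 0 ≤ X v ω) {L : ℝ}
    (hsupp : ∀ v, ∀ᵐ ω ∂μ, X v ω = 0 ∨ L ≤ X v ω) (hsum : L ≤ ∑ v, ∫ ω, X v ω ∂μ)
    {Z : Ω → ℝ} (hZ : Integrable Z μ) (hXZ : ∀ v ω, X v ω ≤ Z ω) (hZ0 : ∀ ω, 0 ≤ Z ω) :
    L ≤ 2 * ∫ ω, Z ω ∂μ := by
  classical
  have := hXi.isProbabilityMeasure
  have hX : ∀ v, AEMeasurable (X v) μ := fun v => (hint v).aemeasurable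
  set q : ι → ℝ := fun w => ∫ ω, zeroIndicator (X w ω) ∂μ
  -- `q w = P(X w = 0)`, so by independence `p = P(∀ w, X w = 0)`
  set p := ∏ w, q w
  have hp0 : 0 ≤ p := prod_nonneg fun w _ => integral_nonneg fun ω => zeroIndicator_nonneg _
  have p_le_prod_erase (v : ι) : p ≤ ∏ w ∈ univ.erase v, q w := by
    rw [show p = q v * ∏ w ∈ univ.erase v, q w from (mul_prod_erase univ q (mem_univ v)).symm]
    exact mul_le_of_le_one_left (prod_nonneg fun w _ => integral_nonneg fun ω =>
      zeroIndicator_nonneg _) (integral_zeroIndicator_le_one _)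
  have some_nonzero : L * (1 - p) ≤ ∫ ω, Z ω ∂μ :=
    calc L * (1 - p) = ∫ ω, L * (1 - ∏ w, zeroIndicator (X w ω)) ∂μ := by
          rw [integral_const_mul, integral_sub (integrable_const 1)
            (integrable_prod_zeroIndicator hX _), hXi.integral_prod_zeroIndicator hX]
          simp [p, q]
      _ ≤ ∫ ω, Z ω ∂μ := by
          refine integral_mono_ae (((integrable_const 1).sub
            (integrable_prod_zeroIndicator hX _)).const_mul L) hZ ?_
          filter_upwards [ae_all_iff.2 hsupp] with ω hω
          exact mul_one_sub_prod_zeroIndicator_le hω (hXZ · ω) (hZ0 ω)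
  have exactly_one_nonzero : p * ∑ v, ∫ ω, X v ω ∂μ ≤ ∫ ω, Z ω ∂μ :=
    calc p * ∑ v, ∫ ω, X v ω ∂μ = ∑ v, (∫ ω, X v ω ∂μ) * p := by
          rw [mul_sum]; exact sum_congr rfl fun v _ => mul_comm _ _
      _ ≤ ∑ v, (∫ ω, X v ω ∂μ) * ∏ w ∈ univ.erase v, q w := sum_le_sum fun v _ =>
          mul_le_mul_of_nonneg_left (p_le_prod_erase v) (integral_nonneg (h0 v))
      _ = ∫ ω, ∑ v, X v ω * ∏ w ∈ univ.erase v, zeroIndicator (X w ω) ∂μ := by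
          rw [integral_finsetSum _ fun v _ => integrable_mul_prod_zeroIndicator hX (hint v) _]
          exact sum_congr rfl fun v _ => (hXi.integral_mul_prod_erase_zeroIndicator hX v).symm
      _ ≤ ∫ ω, Z ω ∂μ := integral_mono (integrable_finsetSum _ fun v _ =>
          integrable_mul_prod_zeroIndicator hX (hint v) _) hZ fun ω =>
          sum_mul_prod_erase_zeroIndicator_le (hXZ · ω) (hZ0 ω)
  nlinarith [mul_le_mul_of_nonneg_left hsum hp0]

end Probability

section Bins

variable {ι κ : Type*} [Fintype ι] [DecidableEq κ] (f : ι → κ)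

lemma le_iSup_sum_fiber [Finite κ] {x : ι → ℝ} (hx : ∀ v, 0 ≤ x v) (v : ι) :
    x v ≤ ⨆ i, ∑ w ∈ univ.filter (fun w => f w = i), x w :=
  calc x v ≤ ∑ w ∈ univ.filter (fun w => f w = f v), x w :=
        single_le_sum (fun w _ => hx w) (mem_filter.2 ⟨mem_univ v, rfl⟩)
    _ ≤ _ := le_ciSup (f := fun i => ∑ w ∈ univ.filter (fun w => f w = i), x w)
        (Set.finite_range _).bddAbove (f v)

lemma iSup_sum_fiber_le_sum {x : ι → ℝ} (hx : ∀ v, 0 ≤ x v) :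
    ⨆ i, ∑ w ∈ univ.filter (fun w => f w = i), x w ≤ ∑ w, x w :=
  Real.iSup_le (fun _ => sum_le_sum_of_subset_of_nonneg (filter_subset _ _) fun w _ _ => hx w)
    (sum_nonneg fun w _ => hx w)

lemma integrable_iSup_sum_fiber [Finite κ] {Ω : Type*} [MeasurableSpace Ω] {μ : Measure Ω}
    {X : ι → Ω → ℝ} (hint : ∀ v, Integrable (X v) μ) (h0 : ∀ v ω, 0 ≤ X v ω) :
    Integrable (fun ω => ⨆ i, ∑ w ∈ univ.filter (fun w => f w = i), X w ω) μ := by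
  have : Countable κ := Finite.to_countable
  refine (integrable_finsetSum univ fun v _ => hint v).mono'
    (AEMeasurable.iSup fun i => Finset.aemeasurable_fun_sum _ fun v _ =>
      (hint v).aemeasurable).aestronglyMeasurable (ae_of_all _ fun ω => ?_)
  rw [Real.norm_of_nonneg (Real.iSup_nonneg fun i => sum_nonneg fun v _ => h0 v ω)]
  simpa using iSup_sum_fiber_le_sum f (h0 · ω)

end Bins

theorem stmt_12_general {Ω : Type*} [MeasureSpace Ω]
    (n k : ℕ) (L : ℝ)
    (X : Fin n → Ω → ℝ)
    (hint : ∀ v, Integrable (X v) ℙ)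
    (h0 : ∀ v ω, 0 ≤ X v ω)
    (hindep : iIndepFun X ℙ)
    (hsupp : ∀ v, ∀ᵐ ω ∂ℙ, X v ω = 0 ∨ L ≤ X v ω)
    (hsum : L ≤ ∑ v, ∫ ω, X v ω)
    (assign : Fin n → Fin k) :
    L / 4 ≤ ∫ ω, ⨆ i : Fin k,
      ∑ v ∈ Finset.univ.filter (fun v => assign v = i), X v ω := by
  have hZ0 : 0 ≤ fun ω => ⨆ i : Fin k, ∑ v ∈ univ.filter (fun v => assign v = i), X v ω :=
    fun ω => Real.iSup_nonneg fun _ => sum_nonneg fun v _ => h0 v ω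
  have := hindep.le_two_mul_integral_of_forall_le hint h0 hsupp hsum
    (integrable_iSup_sum_fiber assign hint h0) (fun v ω => le_iSup_sum_fiber assign (h0 · ω) v) hZ0
  linarith [integral_nonneg (μ := ℙ) hZ0]

theorem stmt_12 {Ω : Type*} [MeasureSpace Ω] [IsProbabilityMeasure (ℙ : Measure Ω)]
    (n k : ℕ) (hk : 0 < k) (L : ℝ) (hL : 0 < L)
    (X : Fin n → Ω → ℝ)
    (hint : ∀ v, Integrable (X v) ℙ)
    (h0 : ∀ v ω, 0 ≤ X v ω)
    (hindep : iIndepFun X ℙ)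
    (hsupp : ∀ v, ∀ᵐ ω ∂ℙ, X v ω = 0 ∨ L ≤ X v ω)
    (hsum : L ≤ ∑ v, ∫ ω, X v ω)
    (assign : Fin n → Fin k) :
    L / 4 ≤ ∫ ω, ⨆ i : Fin k,
      ∑ v ∈ Finset.univ.filter (fun v => assign v = i), X v ω :=
  stmt_12_general n k L X hint h0 hindep hsupp hsum assign
end
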